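/- Let p_1 ≥ p_2 ≥ ... ≥ p_n > 0 be a TS instance, let K > 0, and let s be a feasible schedule with makespan T. Then there exists a feasible schedule s' in which every start time s'_j is a nonnegative integer multiple of K and whose makespan is at most T + nK; consequently, restricting start times to multiples of K increases the optimal makespan by at most nK. -/

import Mathlib

/-- A schedule `s` is feasible for the TS instance given by sizes `p 1 ≥ … ≥ p n > 0`:
start times are nonnegative and any two distinct jobs are separated by at least
the smaller of the two sizes. -/
def Feasible (n : ℕ) (p s : ℕ → ℝ) : Prop :=
  (∀ j, 1 ≤ j → j ≤ n → 0 ≤ s j) ∧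
  ∀ i j, 1 ≤ i → i ≤ n → 1 ≤ j → j ≤ n → i ≠ j → min (p i) (p j) ≤ |s i - s j|

/-- The makespan of a schedule: `max_j (s j + p j)` over jobs `1 ≤ j ≤ n`. -/
noncomputable def makespan (n : ℕ) (p s : ℕ → ℝ) : ℝ :=
  sSup ((fun j => s j + p j) '' Set.Icc 1 n)

/-- `OPT`: the infimum of the makespan over all feasible schedules. -/
noncomputable def OPT (n : ℕ) (p : ℕ → ℝ) : ℝ :=
  sInf {T | ∃ s : ℕ → ℝ, Feasible n p s ∧ makespan n p s = T}

/-!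
Round every start time up to the grid `K ℕ` and additionally shift job `j` by `K` times its
rank, the number of jobs starting strictly before it. Rounding up alone can shrink a gap by
less than `K`; the rank shift widens every gap between distinct start times by at least `K`,
so no gap shrinks and feasibility survives. Each job is delayed by less than `K` from the
rounding plus at most `(n - 1) K` from its rank, which gives the bound `T + n K`.
-/

open Finset

section GridRounding

variable {ι : Type*} (K : ℝ) (A : Finset ι) (s : ι → ℝ)

noncomputable def rankBelow (j : ι) : ℕ := #{i ∈ A | s i < s j}

noncomputable def gridRound (j : ι) : ℝ := (⌈s j / K⌉₊ + rankBelow A s j : ℕ) * K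

variable {A s}

lemma rankBelow_lt_rankBelow {i j : ι} (hi : i ∈ A) (hij : s i < s j) :
    rankBelow A s i < rankBelow A s j := by
  refine card_lt_card ⟨fun k hk => ?_, fun hsub => ?_⟩
  · simp only [mem_filter] at hk ⊢
    exact ⟨hk.1, hk.2.trans hij⟩
  · have := (mem_filter.mp (hsub (mem_filter.mpr ⟨hi, hij⟩))).2
    exact lt_irrefl _ this

lemma rankBelow_lt_card {j : ι} (hj : j ∈ A) : rankBelow A s j < #A :=
  card_lt_card (filter_ssubset.mpr ⟨j, hj, lt_irrefl _⟩)

variable {K}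

lemma sub_le_gridRound_sub (hK : 0 < K) {i j : ι} (hi : i ∈ A) (hsi : 0 ≤ s i)
    (hij : s i ≤ s j) : s j - s i ≤ gridRound K A s j - gridRound K A s i := by
  rcases hij.eq_or_lt with heq | hlt
  · simp [gridRound, rankBelow, heq]
  have hrank : (rankBelow A s i : ℝ) + 1 ≤ rankBelow A s j := by
    exact_mod_cast rankBelow_lt_rankBelow hi hlt
  have hceil_j : s j / K ≤ ⌈s j / K⌉₊ := Nat.le_ceil _
  have hceil_i : (⌈s i / K⌉₊ : ℝ) < s i / K + 1 := Nat.ceil_lt_add_one (by positivity)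
  have hquot : (s j - s i) / K ≤ (⌈s j / K⌉₊ + rankBelow A s j : ℕ) -
      ((⌈s i / K⌉₊ + rankBelow A s i : ℕ) : ℝ) := by
    push_cast
    rw [sub_div]
    linarith
  rw [gridRound, gridRound, ← sub_mul]
  exact (div_le_iff₀ hK).mp hquot

lemma abs_sub_le_abs_gridRound_sub (hK : 0 < K) {i j : ι} (hi : i ∈ A) (hj : j ∈ A)
    (hsi : 0 ≤ s i) (hsj : 0 ≤ s j) :
    |s i - s j| ≤ |gridRound K A s i - gridRound K A s j| := by
  rcases le_total (s i) (s j) with hij | hji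
  · have := sub_le_gridRound_sub hK hi hsi hij
    rw [abs_sub_comm, abs_of_nonneg (sub_nonneg.mpr hij), abs_sub_comm]
    exact this.trans (le_abs_self _)
  · have := sub_le_gridRound_sub hK hj hsj hji
    rw [abs_of_nonneg (sub_nonneg.mpr hji)]
    exact this.trans (le_abs_self _)

lemma gridRound_le (hK : 0 < K) {j : ι} (hj : j ∈ A) (hsj : 0 ≤ s j) :
    gridRound K A s j ≤ s j + #A * K := by
  have hrank : (rankBelow A s j : ℝ) + 1 ≤ #A := by exact_mod_cast rankBelow_lt_card hj
  have hceil : (⌈s j / K⌉₊ : ℝ) < s j / K + 1 := Nat.ceil_lt_add_one (by positivity)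
  have hquot : ((⌈s j / K⌉₊ + rankBelow A s j : ℕ) : ℝ) ≤ s j / K + #A := by
    push_cast
    linarith
  calc gridRound K A s j ≤ (s j / K + #A) * K := mul_le_mul_of_nonneg_right hquot hK.le
    _ = s j + #A * K := by field_simp

end GridRounding

lemma Feasible.of_abs_sub_le {n : ℕ} {p s s' : ℕ → ℝ} (hs : Feasible n p s)
    (hnonneg : ∀ j, 1 ≤ j → j ≤ n → 0 ≤ s' j)
    (hdist : ∀ i j, 1 ≤ i → i ≤ n → 1 ≤ j → j ≤ n → |s i - s j| ≤ |s' i - s' j|) :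
    Feasible n p s' :=
  ⟨hnonneg, fun i j hi hi' hj hj' hij =>
    (hs.2 i j hi hi' hj hj' hij).trans (hdist i j hi hi' hj hj')⟩

lemma le_makespan {n : ℕ} {p s : ℕ → ℝ} {j : ℕ} (hj : 1 ≤ j) (hj' : j ≤ n) :
    s j + p j ≤ makespan n p s :=
  le_csSup ((Set.finite_Icc 1 n).image _).bddAbove ⟨j, ⟨hj, hj'⟩, rfl⟩

lemma makespan_le_add {n : ℕ} {p s s' : ℕ → ℝ} {c : ℝ} (hc : 0 ≤ c)
    (hdelay : ∀ j, 1 ≤ j → j ≤ n → s' j ≤ s j + c) :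
    makespan n p s' ≤ makespan n p s + c := by
  rcases Nat.eq_zero_or_pos n with rfl | hn
  · simp [makespan, hc]
  refine csSup_le ⟨_, ⟨1, ⟨le_rfl, hn⟩, rfl⟩⟩ ?_
  rintro _ ⟨j, ⟨hj, hj'⟩, rfl⟩
  linarith [hdelay j hj hj', le_makespan (p := p) (s := s) hj hj']

theorem stmt17_general (n : ℕ) (p : ℕ → ℝ)
    (K : ℝ) (hK : 0 < K)
    (s : ℕ → ℝ) (hs : Feasible n p s)
    (T : ℝ) (hT : makespan n p s = T) :
    ∃ s' : ℕ → ℝ, Feasible n p s' ∧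
      (∀ j, 1 ≤ j → j ≤ n → ∃ m : ℕ, s' j = m * K) ∧
      makespan n p s' ≤ T + n * K := by
  subst hT
  have hmem : ∀ j, 1 ≤ j → j ≤ n → j ∈ Icc 1 n := fun j hj hj' => mem_Icc.mpr ⟨hj, hj'⟩
  refine ⟨gridRound K (Icc 1 n) s, hs.of_abs_sub_le ?_ ?_, fun j _ _ => ⟨_, rfl⟩, ?_⟩
  · intro j _ _
    exact mul_nonneg (Nat.cast_nonneg _) hK.le
  · intro i j hi hi' hj hj'
    exact abs_sub_le_abs_gridRound_sub hK (hmem i hi hi') (hmem j hj hj')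
      (hs.1 i hi hi') (hs.1 j hj hj')
  · refine makespan_le_add (by positivity) fun j hj hj' => ?_
    simpa using gridRound_le hK (hmem j hj hj') (hs.1 j hj hj')

/-- for any `K > 0` and any feasible schedule `s` with makespan `T`, there
is a feasible schedule `s'` whose start times are all nonnegative integer multiples of
`K` and whose makespan is at most `T + nK`. -/
theorem stmt17 (n : ℕ) (hn : 1 ≤ n) (p : ℕ → ℝ)
    (hsort : ∀ i j, 1 ≤ i → i ≤ j → j ≤ n → p j ≤ p i)
    (hpos : ∀ i, 1 ≤ i → i ≤ n → 0 < p i)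
    (K : ℝ) (hK : 0 < K)
    (s : ℕ → ℝ) (hs : Feasible n p s)
    (T : ℝ) (hT : makespan n p s = T) :
    ∃ s' : ℕ → ℝ, Feasible n p s' ∧
      (∀ j, 1 ≤ j → j ≤ n → ∃ m : ℕ, s' j = m * K) ∧
      makespan n p s' ≤ T + n * K :=
  stmt17_general n p K hK s hs T hT
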